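/- arXiv:1307.8291 — 3 statements merged into one kernel-verified Lean document; each statement's English description precedes it below -/
import Mathlib

section
/- Let f : I ⊂ [0,∞) → ℝ be differentiable on I°, m ∈ (0,1], ma, b ∈ I° with a < b, and suppose f' is integrable on [ma, mb]. If |f'| is (α,m)-convex on [ma,b] for some (α,m) ∈ [0,1]², then for every x ∈ [a,b], λ ∈ [0,1] and θ > 0: |S_f(mx,λ,θ,ma,mb)| ≤ (m^θ/(b−a)) { (x−a)^{θ+1} (|f'(mx)| A₂(α,θ,λ) + m |f'(a)| A₃(α,θ,λ)) + (b−x)^{θ+1} (|f'(mx)| A₂(α,θ,λ) + m |f'(b)| A₃(α,θ,λ)) }. -/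
/-!
Substituting `s = P + (Q - P) t` and integrating by parts, the kernel integral
`∫₀¹ (t ^ θ - λ) f'(P + (Q - P) t) dt` times `(Q - P) ^ (θ + 1)` equals the boundary terms of `S_f`
minus `Γ(θ + 1)` times a Riemann–Liouville integral of `f` between `P` and `Q`. Taking `P = ma` and
`P = mb` with `Q = mx` expresses `S_f` through two such kernel integrals. The `(α,m)`-convexity of
`|f'|` bounds `|f'(t · mx + m(1 - t) v)|` by `t ^ α |f'(mx)| + m (1 - t ^ α) |f'(v)|`, and `A₂`, `A₃`
are the integrals of `|t ^ θ - λ|` against `t ^ α` and `1 - t ^ α`, computed by splitting `[0, 1]`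
at `λ ^ (1 / θ)`.
-/

open MeasureTheory Set intervalIntegral Real

/-- Riemann-Liouville fractional integral `J_{d^-}^θ f(c) = (1/Γ(θ)) ∫_c^d (t-c)^(θ-1) f(t) dt`. -/
noncomputable def rlLeft (θ c d : ℝ) (f : ℝ → ℝ) : ℝ :=
  (1 / Real.Gamma θ) * ∫ t in c..d, (t - c) ^ (θ - 1) * f t

/-- Riemann-Liouville fractional integral `J_{c^+}^θ f(d) = (1/Γ(θ)) ∫_c^d (d-t)^(θ-1) f(t) dt`. -/
noncomputable def rlRight (θ c d : ℝ) (f : ℝ → ℝ) : ℝ :=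
  (1 / Real.Gamma θ) * ∫ t in c..d, (d - t) ^ (θ - 1) * f t

/-- The quantity `S_f(mx, λ, θ, ma, mb)` from the paper. -/
noncomputable def Sf (f : ℝ → ℝ) (m a b x lam θ : ℝ) : ℝ :=
  (1 - lam) * m ^ (θ - 1) * (((x - a) ^ θ + (b - x) ^ θ) / (b - a)) * f (m * x)
  + lam * m ^ (θ - 1) * (((x - a) ^ θ * f (m * a) + (b - x) ^ θ * f (m * b)) / (b - a))
  - Real.Gamma (θ + 1) / (m * (b - a)) *
      (rlLeft θ (m * a) (m * x) f + rlRight θ (m * x) (m * b) f)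

/-- `(α,m)`-convexity of `g` on the interval `[c,d]`. -/
def AlphaMConvexOn (α m c d : ℝ) (g : ℝ → ℝ) : Prop :=
  ∀ u ∈ Set.Icc c d, ∀ v ∈ Set.Icc c d, ∀ t ∈ Set.Icc (0:ℝ) 1,
    t * u + m * (1 - t) * v ∈ Set.Icc c d →
      g (t * u + m * (1 - t) * v) ≤ t ^ α * g u + m * (1 - t ^ α) * g v

noncomputable def A1 (θ lam : ℝ) : ℝ := (2 * θ * lam ^ (1 + 1 / θ) + 1) / (θ + 1) - lam

noncomputable def A2 (α θ lam : ℝ) : ℝ :=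
  2 * θ * lam ^ (1 + (1 + α) / θ) / ((α + 1) * (α + θ + 1)) + 1 / (α + θ + 1) - lam / (α + 1)

noncomputable def A3 (α θ lam : ℝ) : ℝ := A1 θ lam - A2 α θ lam

section PowerWeights

variable {θ lam α : ℝ}

lemma integral_abs_rpow_sub_mul_rpow (hθ : 0 < θ) (hα : 0 ≤ α) (hl0 : 0 ≤ lam) (hl1 : lam ≤ 1) :
    ∫ t in (0:ℝ)..1, |t ^ θ - lam| * t ^ α = A2 α θ lam := by
  have hα1 : -1 < α := by linarith
  have hint : ∀ p q : ℝ, IntervalIntegrable (fun t => |t ^ θ - lam| * t ^ α) volume p q :=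
    fun p q => (intervalIntegrable_rpow' hα1).continuousOn_mul
      ((continuous_rpow_const hθ.le).sub continuous_const).abs.continuousOn
  set r := lam ^ θ⁻¹ with hr
  have hr0 : 0 ≤ r := rpow_nonneg hl0 _
  have hr1 : r ≤ 1 := rpow_le_one hl0 hl1 (by positivity)
  have hrθ : r ^ θ = lam := rpow_inv_rpow hl0 hθ.ne'
  set F : ℝ → ℝ := fun t => lam * (t ^ (α + 1) / (α + 1)) - t ^ (θ + α + 1) / (θ + α + 1)
  have hF : ∀ p q : ℝ, ∫ t in p..q, (lam * t ^ α - t ^ (θ + α)) = F q - F p := by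
    intro p q
    rw [intervalIntegral.integral_sub ((intervalIntegrable_rpow' hα1).const_mul lam)
        (intervalIntegrable_rpow' (by linarith)), intervalIntegral.integral_const_mul,
      integral_rpow (Or.inl hα1), integral_rpow (Or.inl (by linarith))]
    ring
  have below : ∀ t ∈ uIcc 0 r, |t ^ θ - lam| * t ^ α = lam * t ^ α - t ^ (θ + α) := by
    intro t ht
    rw [uIcc_of_le hr0] at ht
    have : t ^ θ ≤ lam := hrθ ▸ rpow_le_rpow ht.1 ht.2 hθ.le
    rw [abs_of_nonpos (by linarith), rpow_add' ht.1 (by linarith)]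
    ring
  have above : ∀ t ∈ uIcc r 1, |t ^ θ - lam| * t ^ α = -(lam * t ^ α - t ^ (θ + α)) := by
    intro t ht
    rw [uIcc_of_le hr1] at ht
    have : lam ≤ t ^ θ := hrθ ▸ rpow_le_rpow hr0 ht.1 hθ.le
    rw [abs_of_nonneg (by linarith), rpow_add' (hr0.trans ht.1) (by linarith)]
    ring
  have hrα : r ^ (α + 1) = lam ^ ((1 + α) / θ) := by
    rw [hr, ← rpow_mul hl0]
    congr 1
    ring
  have hrθα : r ^ (θ + α + 1) = lam * lam ^ ((1 + α) / θ) := by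
    rw [hr, ← rpow_mul hl0, ← rpow_one_add' hl0 (by positivity)]
    congr 1
    field_simp
    ring
  rw [← integral_add_adjacent_intervals (hint 0 r) (hint r 1), intervalIntegral.integral_congr below,
    intervalIntegral.integral_congr above, intervalIntegral.integral_neg, hF, hF]
  simp only [F, hrα, hrθα, zero_rpow (by positivity : α + 1 ≠ 0),
    zero_rpow (by positivity : θ + α + 1 ≠ 0), one_rpow, A2,
    rpow_one_add' hl0 (by positivity : 1 + (1 + α) / θ ≠ 0)]
  generalize lam ^ ((1 + α) / θ) = μ
  field_simp
  ring

lemma integral_abs_rpow_sub (hθ : 0 < θ) (hl0 : 0 ≤ lam) (hl1 : lam ≤ 1) :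
    ∫ t in (0:ℝ)..1, |t ^ θ - lam| = A1 θ lam := by
  have h := integral_abs_rpow_sub_mul_rpow hθ le_rfl hl0 hl1
  simp only [rpow_zero, mul_one] at h
  rw [h, A2, A1]
  simp only [zero_add, add_zero, one_mul, div_one]
  ring

lemma abs_integral_rpow_sub_mul_le {g : ℝ → ℝ} {X Y : ℝ} (hθ : 0 < θ) (hα : 0 ≤ α)
    (hl0 : 0 ≤ lam) (hl1 : lam ≤ 1) (hg : IntervalIntegrable g volume 0 1)
    (hbd : ∀ t ∈ Icc (0:ℝ) 1, |g t| ≤ t ^ α * X + (1 - t ^ α) * Y) :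
    |∫ t in (0:ℝ)..1, (t ^ θ - lam) * g t| ≤ X * A2 α θ lam + Y * A3 α θ lam := by
  have hw_cont : Continuous fun t : ℝ => |t ^ θ - lam| :=
    ((continuous_rpow_const hθ.le).sub continuous_const).abs
  have hw : IntervalIntegrable (fun t : ℝ => |t ^ θ - lam|) volume 0 1 :=
    hw_cont.intervalIntegrable 0 1
  have hwα : IntervalIntegrable (fun t : ℝ => |t ^ θ - lam| * t ^ α) volume 0 1 :=
    (intervalIntegrable_rpow' (by linarith)).continuousOn_mul hw_cont.continuousOn
  calc |∫ t in (0:ℝ)..1, (t ^ θ - lam) * g t|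
      ≤ ∫ t in (0:ℝ)..1, |t ^ θ - lam| * |g t| := by
        simp_rw [← abs_mul]
        exact intervalIntegral.abs_integral_le_integral_abs zero_le_one
    _ ≤ ∫ t in (0:ℝ)..1, X * (|t ^ θ - lam| * t ^ α)
          + Y * (|t ^ θ - lam| - |t ^ θ - lam| * t ^ α) := by
        refine intervalIntegral.integral_mono_on zero_le_one
          (hg.abs.continuousOn_mul hw_cont.continuousOn)
          ((hwα.const_mul X).add ((hw.sub hwα).const_mul Y)) fun t ht => ?_
        calc |t ^ θ - lam| * |g t| ≤ |t ^ θ - lam| * (t ^ α * X + (1 - t ^ α) * Y) :=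
              mul_le_mul_of_nonneg_left (hbd t ht) (abs_nonneg _)
          _ = _ := by ring
    _ = X * A2 α θ lam + Y * A3 α θ lam := by
        rw [intervalIntegral.integral_add (hwα.const_mul X) ((hw.sub hwα).const_mul Y),
          intervalIntegral.integral_const_mul, intervalIntegral.integral_const_mul,
          intervalIntegral.integral_sub hw hwα, integral_abs_rpow_sub_mul_rpow hθ hα hl0 hl1,
          integral_abs_rpow_sub hθ hl0 hl1, A3]

end PowerWeights

noncomputable def kernelIntegral (f' : ℝ → ℝ) (θ lam P Q : ℝ) : ℝ :=
  ∫ t in (0:ℝ)..1, (t ^ θ - lam) * f' (P + (Q - P) * t)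

section KernelIntegral

variable {f f' : ℝ → ℝ} {θ lam P Q : ℝ}

lemma intervalIntegrable_comp_affine {g : ℝ → ℝ} (h : IntervalIntegrable g volume P Q) :
    IntervalIntegrable (fun t => g (P + (Q - P) * t)) volume 0 1 := by
  rcases eq_or_ne Q P with rfl | hPQ
  · simp
  · have h' := (h.comp_add_left P).comp_mul_left (c := Q - P)
    simpa [div_self (sub_ne_zero.mpr hPQ)] using h'

lemma sub_mul_kernelIntegral (hθ : 0 < θ) (hf : ∀ y ∈ uIcc P Q, HasDerivAt f (f' y) y)
    (hint : IntervalIntegrable f' volume P Q) :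
    (Q - P) * kernelIntegral f' θ lam P Q
      = (1 - lam) * f Q + lam * f P - θ * ∫ t in (0:ℝ)..1, t ^ (θ - 1) * f (P + (Q - P) * t) := by
  have hγ : ∀ t ∈ uIcc (0:ℝ) 1, P + (Q - P) * t ∈ uIcc P Q := fun t ht => by
    have := (convex_uIcc P Q).add_smul_sub_mem left_mem_uIcc right_mem_uIcc
      (by rwa [uIcc_of_le zero_le_one] at ht)
    rwa [smul_eq_mul, mul_comm] at this
  have hfγ : ∀ t ∈ uIcc (0:ℝ) 1, HasDerivAt (fun t => f (P + (Q - P) * t))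
      (f' (P + (Q - P) * t) * (Q - P)) t := fun t ht =>
    (hf _ (hγ t ht)).comp t (((hasDerivAt_id t).const_mul (Q - P)).const_add P |>.congr_deriv
      (by simp))
  have hibp := intervalIntegral.integral_mul_deriv_eq_deriv_mul_of_hasDerivAt
    (u := fun t : ℝ => t ^ θ - lam) (u' := fun t => θ * t ^ (θ - 1))
    ((continuous_rpow_const hθ.le).sub continuous_const).continuousOn
    (fun t ht => (hfγ t ht).continuousAt.continuousWithinAt)
    (fun t ht => (hasDerivAt_rpow_const (Or.inl (by rw [min_eq_left zero_le_one] at ht; exact ht.1.ne'))).sub_const lam)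
    (fun t ht => hfγ t (Ioo_subset_Icc_self (by simpa using ht)))
    ((intervalIntegrable_rpow' (by linarith)).const_mul θ)
    ((intervalIntegrable_comp_affine hint).mul_const (Q - P))
  simp only [one_rpow, zero_rpow hθ.ne', mul_one, mul_zero, add_zero, add_sub_cancel] at hibp
  simp_rw [mul_assoc θ, intervalIntegral.integral_const_mul] at hibp
  calc (Q - P) * kernelIntegral f' θ lam P Q
      = ∫ t in (0:ℝ)..1, (t ^ θ - lam) * (f' (P + (Q - P) * t) * (Q - P)) := by
        rw [kernelIntegral, ← intervalIntegral.integral_const_mul]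
        congr 1 with t
        ring
    _ = _ := by rw [hibp]; ring

lemma rpow_eq_mul_rpow_sub_one {c : ℝ} (hc : 0 ≤ c) (hθ : θ ≠ 0) : c ^ θ = c * c ^ (θ - 1) := by
  rw [← rpow_one_add' hc (by simpa using hθ), add_sub_cancel]

lemma rpow_mul_integral_eq_rlLeft (f : ℝ → ℝ) (hθ : 0 < θ) (hPQ : P ≤ Q) :
    (Q - P) ^ θ * ∫ t in (0:ℝ)..1, t ^ (θ - 1) * f (P + (Q - P) * t)
      = Gamma θ * rlLeft θ P Q f := by
  have hc : 0 ≤ Q - P := sub_nonneg.mpr hPQ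
  have hsub := intervalIntegral.mul_integral_comp_add_mul
    (f := fun s => (s - P) ^ (θ - 1) * f s) (c := Q - P) (d := P) (a := 0) (b := 1)
  simp only [mul_zero, add_zero, mul_one, add_sub_cancel, add_sub_cancel_left] at hsub
  calc (Q - P) ^ θ * ∫ t in (0:ℝ)..1, t ^ (θ - 1) * f (P + (Q - P) * t)
      = (Q - P) * ∫ t in (0:ℝ)..1, ((Q - P) * t) ^ (θ - 1) * f (P + (Q - P) * t) := by
        rw [← intervalIntegral.integral_const_mul, ← intervalIntegral.integral_const_mul]
        refine intervalIntegral.integral_congr fun t ht => ?_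
        rw [uIcc_of_le zero_le_one] at ht
        rw [mul_rpow hc ht.1, rpow_eq_mul_rpow_sub_one hc hθ.ne']
        ring
    _ = Gamma θ * rlLeft θ P Q f := by
        rw [hsub, rlLeft, ← mul_assoc, mul_one_div_cancel (Gamma_pos_of_pos hθ).ne', one_mul]

lemma rpow_mul_integral_eq_rlRight (f : ℝ → ℝ) (hθ : 0 < θ) (hQP : Q ≤ P) :
    (P - Q) ^ θ * ∫ t in (0:ℝ)..1, t ^ (θ - 1) * f (P + (Q - P) * t)
      = Gamma θ * rlRight θ Q P f := by
  have hc : 0 ≤ P - Q := sub_nonneg.mpr hQP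
  have hsub := intervalIntegral.mul_integral_comp_add_mul
    (f := fun s => (P - s) ^ (θ - 1) * f s) (c := Q - P) (d := P) (a := 0) (b := 1)
  simp only [mul_zero, add_zero, mul_one, add_sub_cancel] at hsub
  calc (P - Q) ^ θ * ∫ t in (0:ℝ)..1, t ^ (θ - 1) * f (P + (Q - P) * t)
      = -((Q - P) * ∫ t in (0:ℝ)..1, (P - (P + (Q - P) * t)) ^ (θ - 1) * f (P + (Q - P) * t)) := by
        rw [← intervalIntegral.integral_const_mul, ← intervalIntegral.integral_const_mul,
          ← intervalIntegral.integral_neg]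
        refine intervalIntegral.integral_congr fun t ht => ?_
        rw [uIcc_of_le zero_le_one] at ht
        rw [show P - (P + (Q - P) * t) = (P - Q) * t by ring, mul_rpow hc ht.1,
          rpow_eq_mul_rpow_sub_one hc hθ.ne']
        ring
    _ = Gamma θ * rlRight θ Q P f := by
        rw [hsub, intervalIntegral.integral_symm, neg_neg, rlRight, ← mul_assoc,
          mul_one_div_cancel (Gamma_pos_of_pos hθ).ne', one_mul]

lemma rpow_mul_kernelIntegral_of_le (hθ : 0 < θ) (hPQ : P ≤ Q)
    (hf : ∀ y ∈ uIcc P Q, HasDerivAt f (f' y) y) (hint : IntervalIntegrable f' volume P Q) :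
    (Q - P) ^ (θ + 1) * kernelIntegral f' θ lam P Q
      = (Q - P) ^ θ * ((1 - lam) * f Q + lam * f P) - Gamma (θ + 1) * rlLeft θ P Q f := by
  rw [rpow_add_one' (sub_nonneg.mpr hPQ) (by linarith), mul_assoc, sub_mul_kernelIntegral hθ hf hint,
    Gamma_add_one hθ.ne', mul_assoc θ, ← rpow_mul_integral_eq_rlLeft f hθ hPQ]
  ring

lemma rpow_mul_kernelIntegral_of_ge (hθ : 0 < θ) (hQP : Q ≤ P)
    (hf : ∀ y ∈ uIcc P Q, HasDerivAt f (f' y) y) (hint : IntervalIntegrable f' volume P Q) :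
    (P - Q) ^ (θ + 1) * kernelIntegral f' θ lam P Q
      = Gamma (θ + 1) * rlRight θ Q P f - (P - Q) ^ θ * ((1 - lam) * f Q + lam * f P) := by
  rw [rpow_add_one' (sub_nonneg.mpr hQP) (by linarith), mul_assoc,
    show (P - Q) * kernelIntegral f' θ lam P Q = -((Q - P) * kernelIntegral f' θ lam P Q) by ring,
    sub_mul_kernelIntegral hθ hf hint, Gamma_add_one hθ.ne', mul_assoc θ,
    ← rpow_mul_integral_eq_rlRight f hθ hQP]
  ring

end KernelIntegral

lemma Sf_eq_kernelIntegral {f f' : ℝ → ℝ} {m a b x lam θ : ℝ} (hm : 0 < m) (hθ : 0 < θ)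
    (hab : a < b) (hax : a ≤ x) (hxb : x ≤ b)
    (hf : ∀ y ∈ Icc (m * a) (m * b), HasDerivAt f (f' y) y)
    (hint : IntervalIntegrable f' volume (m * a) (m * b)) :
    Sf f m a b x lam θ = m ^ θ / (b - a) *
      ((x - a) ^ (θ + 1) * kernelIntegral f' θ lam (m * a) (m * x)
        - (b - x) ^ (θ + 1) * kernelIntegral f' θ lam (m * b) (m * x)) := by
  have hmax : m * a ≤ m * x := mul_le_mul_of_nonneg_left hax hm.le
  have hmxb : m * x ≤ m * b := mul_le_mul_of_nonneg_left hxb hm.le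
  have hleft : uIcc (m * a) (m * x) ⊆ Icc (m * a) (m * b) := by
    rw [uIcc_of_le hmax]; exact Icc_subset_Icc_right hmxb
  have hright : uIcc (m * b) (m * x) ⊆ Icc (m * a) (m * b) := by
    rw [uIcc_of_ge hmxb]; exact Icc_subset_Icc_left hmax
  have hA := rpow_mul_kernelIntegral_of_le (lam := lam) hθ hmax (fun y hy => hf y (hleft hy))
    (hint.mono_set (by rwa [uIcc_of_le (hmax.trans hmxb)]))
  have hB := rpow_mul_kernelIntegral_of_ge (lam := lam) hθ hmxb (fun y hy => hf y (hright hy))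
    (hint.mono_set (by rwa [uIcc_of_le (hmax.trans hmxb)]))
  rw [← mul_sub, mul_rpow hm.le (sub_nonneg.mpr hax), mul_rpow hm.le (sub_nonneg.mpr hax),
    rpow_add_one hm.ne'] at hA
  rw [← mul_sub, mul_rpow hm.le (sub_nonneg.mpr hxb), mul_rpow hm.le (sub_nonneg.mpr hxb),
    rpow_add_one hm.ne'] at hB
  have hba : b - a ≠ 0 := (sub_pos.mpr hab).ne'
  rw [Sf, rpow_sub_one hm.ne']
  field_simp
  linear_combination hB - hA

lemma abs_kernelIntegral_le_of_alphaMConvexOn {f' : ℝ → ℝ} {α m c d θ lam u v : ℝ}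
    (hconv : AlphaMConvexOn α m c d (fun y => |f' y|)) (hθ : 0 < θ) (hα : 0 ≤ α)
    (hl0 : 0 ≤ lam) (hl1 : lam ≤ 1) (hu : u ∈ Icc c d) (hv : v ∈ Icc c d) (hmv : m * v ∈ Icc c d)
    (hint : IntervalIntegrable f' volume (m * v) u) :
    |kernelIntegral f' θ lam (m * v) u| ≤ |f' u| * A2 α θ lam + m * |f' v| * A3 α θ lam := by
  refine abs_integral_rpow_sub_mul_le hθ hα hl0 hl1 (intervalIntegrable_comp_affine hint)
    fun t ht => ?_
  have hpt : m * v + (u - m * v) * t = t * u + m * (1 - t) * v := by ring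
  have hmem : m * v + (u - m * v) * t ∈ Icc c d := by
    have := (convex_Icc c d).add_smul_sub_mem hmv hu ht
    rwa [smul_eq_mul, mul_comm t] at this
  rw [hpt] at hmem ⊢
  calc |f' (t * u + m * (1 - t) * v)| ≤ t ^ α * |f' u| + m * (1 - t ^ α) * |f' v| :=
        hconv u hu v hv t ht hmem
    _ = t ^ α * |f' u| + (1 - t ^ α) * (m * |f' v|) := by ring

theorem powmean_q_one
    (I : Set ℝ) (hI : Set.OrdConnected I) (hI0 : I ⊆ Set.Ici (0:ℝ)) (f f' : ℝ → ℝ) (m a b : ℝ)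
    (hm : m ∈ Set.Ioc (0:ℝ) 1) (hab : a < b)
    (hma : m * a ∈ interior I) (hb : b ∈ interior I)
    (hf : ∀ y ∈ interior I, HasDerivAt f (f' y) y)
    (hint : IntervalIntegrable f' MeasureTheory.volume (m * a) (m * b))
    (α : ℝ) (hα : α ∈ Set.Icc (0:ℝ) 1)
    (hconv : AlphaMConvexOn α m (m * a) b (fun u => |f' u|)) :
    ∀ x ∈ Set.Icc a b, ∀ lam ∈ Set.Icc (0:ℝ) 1, ∀ θ : ℝ, 0 < θ →
      |Sf f m a b x lam θ| ≤
        m ^ θ / (b - a) *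
          ((x - a) ^ (θ + 1) *
              (|f' (m * x)| * A2 α θ lam + m * |f' a| * A3 α θ lam) +
            (b - x) ^ (θ + 1) *
              (|f' (m * x)| * A2 α θ lam + m * |f' b| * A3 α θ lam)) := by
  intro x hx lam hlam θ hθ
  obtain ⟨hm0, hm1⟩ := hm
  have ha : 0 ≤ a := nonneg_of_mul_nonneg_right (hI0 (interior_subset hma)) hm0
  have hmaa : m * a ≤ a := mul_le_of_le_one_left ha hm1
  have hmbb : m * b ≤ b := mul_le_of_le_one_left (ha.trans hab.le) hm1
  have hmax : m * a ≤ m * x := mul_le_mul_of_nonneg_left hx.1 hm0.le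
  have hmxb : m * x ≤ m * b := mul_le_mul_of_nonneg_left hx.2 hm0.le
  have hmx : m * x ∈ Icc (m * a) b := ⟨hmax, hmxb.trans hmbb⟩
  have hmx' : m * x ∈ uIcc (m * a) (m * b) := mem_uIcc_of_le hmax hmxb
  have hsub : Icc (m * a) b ⊆ interior I := hI.interior.out hma hb
  rw [Sf_eq_kernelIntegral hm0 hθ hab hx.1 hx.2
    (fun y hy => hf y (hsub ⟨hy.1, hy.2.trans hmbb⟩)) hint]
  have hKA := abs_kernelIntegral_le_of_alphaMConvexOn hconv hθ hα.1 hlam.1 hlam.2 hmx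
    ⟨hmaa, hab.le⟩ ⟨le_rfl, hmaa.trans hab.le⟩ (hint.mono_set (uIcc_subset_uIcc left_mem_uIcc hmx'))
  have hKB := abs_kernelIntegral_le_of_alphaMConvexOn hconv hθ hα.1 hlam.1 hlam.2 hmx
    ⟨hmaa.trans hab.le, le_rfl⟩ ⟨hmax.trans hmxb, hmbb⟩
    (hint.mono_set (uIcc_subset_uIcc right_mem_uIcc hmx'))
  have hxa : 0 ≤ (x - a) ^ (θ + 1) := rpow_nonneg (sub_nonneg.mpr hx.1) _
  have hbx : 0 ≤ (b - x) ^ (θ + 1) := rpow_nonneg (sub_nonneg.mpr hx.2) _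
  rw [abs_mul, abs_of_nonneg (div_nonneg (rpow_nonneg hm0.le θ) (sub_pos.mpr hab).le)]
  gcongr
  refine (abs_sub _ _).trans ?_
  rw [abs_mul, abs_mul, abs_of_nonneg hxa, abs_of_nonneg hbx]
  gcongr
end

section
/- Let f : I ⊂ [0,∞) → ℝ be differentiable on I°, m ∈ (0,1], ma, b ∈ I° with a < b, and suppose f' is integrable on [ma, mb]. Suppose |f'|^q is (α,m)-convex on [ma,b] for some fixed q ≥ 1 and (α,m) ∈ [0,1]², and |f'(u)| ≤ M for all u ∈ [ma,b]. Then for every x ∈ [a,b] and θ > 0 the Ostrowski-type inequality holds: |((x−a)^θ + (b−x)^θ)/(b−a) · f(mx) − (Γ(θ+1)/(m^θ (b−a))) [J_{(mx)−}^θ f(ma) + J_{(mx)+}^θ f(mb)]| ≤ m M (1/(θ+1)) ((αm+θ+1)/(α+θ+1))^{1/q} · ((x−a)^{θ+1} + (b−x)^{θ+1})/(b−a). -/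
/-
Substituting `u = m v + t (m x - m v)` for `v = a` and `v = b` and integrating by parts in `t`
turns the expression inside the absolute value into
`m / (b - a) * ((x - a)^(θ+1) ∫₀¹ t^θ f'(t m x + m (1 - t) a) dt`
`                - (b - x)^(θ+1) ∫₀¹ t^θ f'(t m x + m (1 - t) b) dt)`.
Each integral is estimated by the power-mean (Hölder) inequality for the weight `t^θ`, and
`(α,m)`-convexity gives `|f'(t m x + m (1 - t) v)|^q ≤ M^q (t^α + m (1 - t^α))`, whose integral
against `t^θ` is `M^q (α m + θ + 1) / ((θ + 1) (α + θ + 1))`.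
-/

open MeasureTheory Set intervalIntegral Real

theorem integral_mul_le_integral_rpow_mul {α : Type*} [MeasurableSpace α] {μ : Measure α}
    {w g : α → ℝ} {q : ℝ} (hq : 1 ≤ q) (hw0 : 0 ≤ᵐ[μ] w) (hg0 : 0 ≤ᵐ[μ] g)
    (hw : Integrable w μ) (hg : AEStronglyMeasurable g μ)
    (hwg : Integrable (fun x => w x * g x ^ q) μ) :
    ∫ x, w x * g x ∂μ ≤ (∫ x, w x ∂μ) ^ (1 - 1 / q) * (∫ x, w x * g x ^ q ∂μ) ^ (1 / q) := by
  rcases hq.eq_or_lt with rfl | hq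
  · simp
  set p := q.conjExponent
  have hpq : p.HolderConjugate q := (Real.HolderConjugate.conjExponent hq).symm
  have hFp : (fun x => (w x ^ (1 / p)) ^ p) =ᵐ[μ] w := by
    filter_upwards [hw0] with x hx
    rw [← rpow_mul hx, one_div_mul_cancel hpq.ne_zero, rpow_one]
  have hGq : (fun x => (w x ^ (1 / q) * g x) ^ q) =ᵐ[μ] fun x => w x * g x ^ q := by
    filter_upwards [hw0, hg0] with x hx hgx
    rw [mul_rpow (rpow_nonneg hx _) hgx, ← rpow_mul hx, one_div_mul_cancel hpq.symm.ne_zero,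
      rpow_one]
  have hF : MemLp (fun x => w x ^ (1 / p)) (ENNReal.ofReal p) μ := by
    rw [← integrable_norm_rpow_iff (hw.aemeasurable.pow_const _).aestronglyMeasurable
      (by simpa using hpq.pos) ENNReal.ofReal_ne_top, ENNReal.toReal_ofReal hpq.nonneg]
    refine hw.congr ?_
    filter_upwards [hFp, hw0] with x hx hx0
    rw [norm_of_nonneg (rpow_nonneg hx0 _), hx]
  have hG : MemLp (fun x => w x ^ (1 / q) * g x) (ENNReal.ofReal q) μ := by
    have hmeas : AEStronglyMeasurable (fun x => w x ^ (1 / q) * g x) μ :=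
      (hw.aemeasurable.pow_const _).aestronglyMeasurable.mul hg
    rw [← integrable_norm_rpow_iff hmeas (by simpa using hpq.symm.pos) ENNReal.ofReal_ne_top,
      ENNReal.toReal_ofReal hpq.symm.nonneg]
    refine hwg.congr ?_
    filter_upwards [hGq, hw0, hg0] with x hx hx0 hgx
    rw [norm_of_nonneg (mul_nonneg (rpow_nonneg hx0 _) hgx), hx]
  have hFG : (fun x => w x ^ (1 / p) * (w x ^ (1 / q) * g x)) =ᵐ[μ] fun x => w x * g x := by
    filter_upwards [hw0] with x hx
    rw [← mul_assoc, ← rpow_add' hx (by simp [hpq.inv_add_inv_eq_one]), one_div, one_div,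
      hpq.inv_add_inv_eq_one, rpow_one]
  have hp : 1 / p = 1 - 1 / q := by
    rw [one_div, one_div, eq_sub_iff_add_eq, hpq.inv_add_inv_eq_one]
  calc ∫ x, w x * g x ∂μ = ∫ x, w x ^ (1 / p) * (w x ^ (1 / q) * g x) ∂μ :=
        (integral_congr_ae hFG).symm
    _ ≤ _ := integral_mul_le_Lp_mul_Lq_of_nonneg hpq
        (by filter_upwards [hw0] with x hx using rpow_nonneg hx _)
        (by filter_upwards [hw0, hg0] with x hx hgx using mul_nonneg (rpow_nonneg hx _) hgx) hF hG
    _ = _ := by rw [integral_congr_ae hFp, integral_congr_ae hGq, hp]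

theorem integral_mul_le_of_integral_mul_rpow_le {α : Type*} [MeasurableSpace α]
    {μ : Measure α} {w g : α → ℝ} {q K : ℝ} (hq : 1 ≤ q) (hK : 0 ≤ K) (hw0 : 0 ≤ᵐ[μ] w)
    (hg0 : 0 ≤ᵐ[μ] g) (hw : Integrable w μ) (hg : AEStronglyMeasurable g μ)
    (hwg : Integrable (fun x => w x * g x ^ q) μ)
    (hle : ∫ x, w x * g x ^ q ∂μ ≤ K ^ q * ∫ x, w x ∂μ) :
    ∫ x, w x * g x ∂μ ≤ K * ∫ x, w x ∂μ := by
  have hW : 0 ≤ ∫ x, w x ∂μ := integral_nonneg_of_ae hw0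
  have hwg0 : 0 ≤ ∫ x, w x * g x ^ q ∂μ := integral_nonneg_of_ae <| by
    filter_upwards [hw0, hg0] with x hx hgx using mul_nonneg hx (rpow_nonneg hgx q)
  calc ∫ x, w x * g x ∂μ
      ≤ (∫ x, w x ∂μ) ^ (1 - 1 / q) * (∫ x, w x * g x ^ q ∂μ) ^ (1 / q) :=
        integral_mul_le_integral_rpow_mul hq hw0 hg0 hw hg hwg
    _ ≤ (∫ x, w x ∂μ) ^ (1 - 1 / q) * (K ^ q * ∫ x, w x ∂μ) ^ (1 / q) := by gcongr
    _ = K * ∫ x, w x ∂μ := by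
        rw [mul_rpow (rpow_nonneg hK q) hW, ← rpow_mul hK, mul_one_div_cancel (by linarith),
          rpow_one, mul_left_comm, ← rpow_add' hW (by simp), sub_add_cancel, rpow_one]

theorem IntervalIntegrable.comp_add_mul_sub {f : ℝ → ℝ} {p y : ℝ}
    (hf : IntervalIntegrable f volume p y) :
    IntervalIntegrable (fun t => f (p + t * (y - p))) volume 0 1 := by
  rcases eq_or_ne y p with rfl | hyp
  · simp
  simpa [sub_self, div_self (sub_ne_zero.2 hyp), mul_comm] using
    (hf.comp_add_left p).comp_mul_left (c := y - p)

theorem integral_sub_right_rpow_mul_eq {c y β : ℝ} (φ : ℝ → ℝ) (hβ : -1 < β) (hcy : c ≤ y) :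
    ∫ u in c..y, (u - c) ^ β * φ u =
      (y - c) ^ (β + 1) * ∫ t in (0:ℝ)..1, t ^ β * φ (c + t * (y - c)) := by
  rcases hcy.eq_or_lt with rfl | hlt
  · simp [zero_rpow (by linarith : β + 1 ≠ 0)]
  have hL : 0 < y - c := sub_pos.2 hlt
  have hsub := integral_comp_add_mul (fun u => (u - c) ^ β * φ u) hL.ne' c (a := 0) (b := 1)
  simp only [mul_zero, add_zero, mul_one, add_sub_cancel, add_sub_cancel_left,
    smul_eq_mul] at hsub
  have hscale : ∫ t in (0:ℝ)..1, ((y - c) * t) ^ β * φ (c + (y - c) * t) =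
      (y - c) ^ β * ∫ t in (0:ℝ)..1, t ^ β * φ (c + t * (y - c)) := by
    rw [← intervalIntegral.integral_const_mul]
    refine integral_congr fun t ht => ?_
    rw [uIcc_of_le zero_le_one] at ht
    simp only [mul_rpow hL.le ht.1, mul_comm t]
    ring
  rw [hscale] at hsub
  rw [rpow_add_one hL.ne', mul_comm ((_ : ℝ) ^ β), mul_assoc, hsub, mul_inv_cancel_left₀ hL.ne']

theorem integral_sub_left_rpow_mul_eq {y d β : ℝ} (φ : ℝ → ℝ) (hβ : -1 < β) (hyd : y ≤ d) :
    ∫ u in y..d, (d - u) ^ β * φ u =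
      (d - y) ^ (β + 1) * ∫ t in (0:ℝ)..1, t ^ β * φ (d + t * (y - d)) := by
  rcases hyd.eq_or_lt with rfl | hlt
  · simp [zero_rpow (by linarith : β + 1 ≠ 0)]
  have hL : 0 < d - y := sub_pos.2 hlt
  have hsub := integral_comp_sub_mul (fun u => (d - u) ^ β * φ u) hL.ne' d (a := 0) (b := 1)
  simp only [mul_zero, sub_zero, mul_one, sub_sub_cancel, smul_eq_mul] at hsub
  have hscale : ∫ t in (0:ℝ)..1, ((d - y) * t) ^ β * φ (d - (d - y) * t) =
      (d - y) ^ β * ∫ t in (0:ℝ)..1, t ^ β * φ (d + t * (y - d)) := by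
    rw [← intervalIntegral.integral_const_mul]
    refine integral_congr fun t ht => ?_
    rw [uIcc_of_le zero_le_one] at ht
    simp only [mul_rpow hL.le ht.1]
    ring_nf
  rw [hscale] at hsub
  rw [rpow_add_one hL.ne', mul_comm ((_ : ℝ) ^ β), mul_assoc, hsub, mul_inv_cancel_left₀ hL.ne']

theorem integral_rpow_mul_deriv_eq {F F' : ℝ → ℝ} {θ : ℝ} (hθ : 0 < θ)
    (hF : ContinuousOn F (Icc 0 1)) (hFF' : ∀ t ∈ Ioo (0:ℝ) 1, HasDerivAt F (F' t) t)
    (hF' : IntervalIntegrable F' volume 0 1) :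
    ∫ t in (0:ℝ)..1, t ^ θ * F' t = F 1 - θ * ∫ t in (0:ℝ)..1, t ^ (θ - 1) * F t := by
  have hibp := integral_mul_deriv_eq_deriv_mul_of_hasDerivAt (a := 0) (b := 1)
    (u' := fun t => θ * t ^ (θ - 1)) (continuous_rpow_const hθ.le).continuousOn
    (by rwa [uIcc_of_le zero_le_one])
    (fun t ht => hasDerivAt_rpow_const (Or.inl (by simp at ht; exact ht.1.ne')))
    (fun t ht => hFF' t (by simpa using ht))
    ((intervalIntegrable_rpow' (by linarith)).const_mul θ) hF'
  rw [hibp, ← intervalIntegral.integral_const_mul]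
  simp [zero_rpow hθ.ne', mul_assoc]

theorem integral_rpow_mul_deriv_comp_segment {f f' : ℝ → ℝ} {p y θ : ℝ} (hθ : 0 < θ)
    (hf : ∀ u ∈ uIcc p y, HasDerivAt f (f' u) u) (hint : IntervalIntegrable f' volume p y) :
    (y - p) * ∫ t in (0:ℝ)..1, t ^ θ * f' (p + t * (y - p)) =
      f y - θ * ∫ t in (0:ℝ)..1, t ^ (θ - 1) * f (p + t * (y - p)) := by
  have hderiv : ∀ t ∈ Icc (0:ℝ) 1,
      HasDerivAt (fun t => f (p + t * (y - p))) ((y - p) * f' (p + t * (y - p))) t := by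
    intro t ht
    have hmem : p + t * (y - p) ∈ uIcc p y :=
      (convex_uIcc p y).add_smul_sub_mem left_mem_uIcc right_mem_uIcc ht
    have hline : HasDerivAt (fun t => p + t * (y - p)) (y - p) t := by
      simpa using ((hasDerivAt_id t).mul_const (y - p)).const_add p
    simpa [Function.comp_def, mul_comm] using (hf _ hmem).comp t hline
  have hibp := integral_rpow_mul_deriv_eq hθ
    (fun t ht => (hderiv t ht).continuousAt.continuousWithinAt)
    (fun t ht => hderiv t (Ioo_subset_Icc_self ht)) (hint.comp_add_mul_sub.const_mul (y - p))
  rw [← intervalIntegral.integral_const_mul]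
  simpa only [mul_left_comm, one_mul, add_sub_cancel] using hibp

theorem integral_rpow_mul_rpow_add_mul_one_sub_rpow {θ α m : ℝ} (hθ : 0 < θ) (hα : 0 ≤ α) :
    ∫ t in (0:ℝ)..1, t ^ θ * (t ^ α + m * (1 - t ^ α)) =
      (α * m + θ + 1) / ((θ + 1) * (α + θ + 1)) := by
  have hsplit : ∫ t in (0:ℝ)..1, t ^ θ * (t ^ α + m * (1 - t ^ α)) =
      ∫ t in (0:ℝ)..1, ((1 - m) * t ^ (θ + α) + m * t ^ θ) := by
    refine integral_congr fun t ht => ?_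
    rw [uIcc_of_le zero_le_one] at ht
    simp only [rpow_add' ht.1 (by linarith : θ + α ≠ 0)]
    ring
  have hθα : -1 < θ + α := by linarith
  rw [hsplit, integral_add ((intervalIntegrable_rpow' hθα).const_mul _)
    ((intervalIntegrable_rpow' (by linarith)).const_mul _), intervalIntegral.integral_const_mul,
    intervalIntegral.integral_const_mul, integral_rpow (Or.inl hθα),
    integral_rpow (Or.inl (by linarith))]
  simp only [one_rpow, zero_rpow (by linarith : θ + α + 1 ≠ 0), zero_rpow (by linarith : θ + 1 ≠ 0)]
  field_simp
  ring

theorem integral_rpow_mul_abs_le {φ : ℝ → ℝ} {θ α m q M : ℝ} (hθ : 0 < θ) (hα : 0 ≤ α)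
    (hm : 0 ≤ m) (hq : 1 ≤ q) (hM : 0 ≤ M) (hφ : IntervalIntegrable φ volume 0 1)
    (hφq : ∀ t ∈ Icc (0:ℝ) 1, |φ t| ^ q ≤ M ^ q * (t ^ α + m * (1 - t ^ α))) :
    ∫ t in (0:ℝ)..1, t ^ θ * |φ t| ≤
      M / (θ + 1) * ((α * m + θ + 1) / (α + θ + 1)) ^ (1 / q) := by
  set R := (α * m + θ + 1) / (α + θ + 1)
  have hR : 0 ≤ R := by positivity
  have hdom : IntervalIntegrable (fun t => M ^ q * (t ^ θ * (t ^ α + m * (1 - t ^ α))))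
      volume 0 1 := by
    have hα' := continuous_rpow_const hα
    exact (continuous_const.mul ((continuous_rpow_const hθ.le).mul
      (hα'.add (continuous_const.mul (continuous_const.sub hα'))))).intervalIntegrable 0 1
  have hw : IntervalIntegrable (fun t : ℝ => t ^ θ) volume 0 1 :=
    intervalIntegrable_rpow' (by linarith)
  have hw_eq : ∫ t in Ioc (0:ℝ) 1, t ^ θ = 1 / (θ + 1) := by
    rw [← intervalIntegral.integral_of_le zero_le_one, integral_rpow (Or.inl (by linarith))]
    simp [zero_rpow (by linarith : θ + 1 ≠ 0)]
  have hbound : ∀ᵐ t ∂volume.restrict (Ioc (0:ℝ) 1),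
      t ^ θ * |φ t| ^ q ≤ M ^ q * (t ^ θ * (t ^ α + m * (1 - t ^ α))) := by
    filter_upwards [ae_restrict_mem measurableSet_Ioc] with t ht
    have := mul_le_mul_of_nonneg_left (hφq t (Ioc_subset_Icc_self ht)) (rpow_nonneg ht.1.le θ)
    linarith
  have hwg : Integrable (fun t => t ^ θ * |φ t| ^ q) (volume.restrict (Ioc (0:ℝ) 1)) := by
    refine hdom.1.mono'
      (hw.1.aemeasurable.mul (hφ.1.abs.aemeasurable.pow_const q)).aestronglyMeasurable ?_
    filter_upwards [hbound, ae_restrict_mem measurableSet_Ioc] with t ht ht'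
    rwa [norm_of_nonneg (mul_nonneg (rpow_nonneg ht'.1.le θ) (rpow_nonneg (abs_nonneg _) q))]
  have hle : ∫ t in Ioc (0:ℝ) 1, t ^ θ * |φ t| ^ q ≤
      (M * R ^ (1 / q)) ^ q * ∫ t in Ioc (0:ℝ) 1, t ^ θ := by
    rw [mul_rpow hM (rpow_nonneg hR _), ← rpow_mul hR, one_div_mul_cancel (by linarith),
      rpow_one, hw_eq]
    calc _ ≤ ∫ t in Ioc (0:ℝ) 1, M ^ q * (t ^ θ * (t ^ α + m * (1 - t ^ α))) :=
          integral_mono_ae hwg hdom.1 hbound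
      _ = M ^ q * R * (1 / (θ + 1)) := by
          rw [← intervalIntegral.integral_of_le zero_le_one, intervalIntegral.integral_const_mul,
            integral_rpow_mul_rpow_add_mul_one_sub_rpow hθ hα, mul_assoc, div_mul_div_comm,
            mul_one, mul_comm (θ + 1)]
  rw [intervalIntegral.integral_of_le zero_le_one]
  refine (integral_mul_le_of_integral_mul_rpow_le hq (by positivity)
    (by filter_upwards [ae_restrict_mem measurableSet_Ioc] with t ht using rpow_nonneg ht.1.le θ)
    (ae_of_all _ fun t => abs_nonneg _) hw.1 hφ.1.abs.aestronglyMeasurable hwg hle).trans_eq ?_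
  rw [hw_eq]
  ring

theorem AlphaMConvexOn.le_mul_of_le {α m c d N : ℝ} {g : ℝ → ℝ} (hg : AlphaMConvexOn α m c d g)
    (hα : 0 ≤ α) (hm : 0 ≤ m) (hN : ∀ u ∈ Icc c d, g u ≤ N) {u v t : ℝ} (hu : u ∈ Icc c d)
    (hv : v ∈ Icc c d) (ht : t ∈ Icc (0:ℝ) 1) (hmem : t * u + m * (1 - t) * v ∈ Icc c d) :
    g (t * u + m * (1 - t) * v) ≤ N * (t ^ α + m * (1 - t ^ α)) := by
  have htα : 0 ≤ 1 - t ^ α := sub_nonneg.2 (rpow_le_one ht.1 ht.2 hα)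
  calc g (t * u + m * (1 - t) * v) ≤ t ^ α * g u + m * (1 - t ^ α) * g v :=
        hg u hu v hv t ht hmem
    _ ≤ t ^ α * N + m * (1 - t ^ α) * N :=
        add_le_add (mul_le_mul_of_nonneg_left (hN u hu) (rpow_nonneg ht.1 α))
          (mul_le_mul_of_nonneg_left (hN v hv) (mul_nonneg hm htα))
    _ = N * (t ^ α + m * (1 - t ^ α)) := by ring

theorem abs_integral_rpow_mul_comp_segment_le {f' : ℝ → ℝ} {α m c d q M θ v y : ℝ}
    (hθ : 0 < θ) (hα : 0 ≤ α) (hm : 0 ≤ m) (hq : 1 ≤ q)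
    (hconv : AlphaMConvexOn α m c d (fun u => |f' u| ^ q)) (hM : ∀ u ∈ Icc c d, |f' u| ≤ M)
    (hv : v ∈ Icc c d) (hmv : m * v ∈ Icc c d) (hy : y ∈ Icc c d)
    (hint : IntervalIntegrable f' volume (m * v) y) :
    |∫ t in (0:ℝ)..1, t ^ θ * f' (m * v + t * (y - m * v))| ≤
      M / (θ + 1) * ((α * m + θ + 1) / (α + θ + 1)) ^ (1 / q) := by
  have hMq : ∀ u ∈ Icc c d, |f' u| ^ q ≤ M ^ q := fun u hu =>
    rpow_le_rpow (abs_nonneg _) (hM u hu) (by linarith)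
  have hpoint : ∀ t ∈ Icc (0:ℝ) 1,
      |f' (m * v + t * (y - m * v))| ^ q ≤ M ^ q * (t ^ α + m * (1 - t ^ α)) := by
    intro t ht
    have hseg : m * v + t * (y - m * v) = t * y + m * (1 - t) * v := by ring
    have hmem : m * v + t * (y - m * v) ∈ Icc c d :=
      (convex_Icc c d).add_smul_sub_mem hmv hy ht
    rw [hseg] at hmem ⊢
    exact hconv.le_mul_of_le hα hm hMq hy hv ht hmem
  calc |∫ t in (0:ℝ)..1, t ^ θ * f' (m * v + t * (y - m * v))|
      ≤ ∫ t in (0:ℝ)..1, |t ^ θ * f' (m * v + t * (y - m * v))| :=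
        abs_integral_le_integral_abs zero_le_one
    _ = ∫ t in (0:ℝ)..1, t ^ θ * |f' (m * v + t * (y - m * v))| := by
        refine integral_congr fun t ht => ?_
        rw [uIcc_of_le zero_le_one] at ht
        simp only [abs_mul, abs_of_nonneg (rpow_nonneg ht.1 θ)]
    _ ≤ _ := integral_rpow_mul_abs_le hθ hα hm hq ((abs_nonneg _).trans (hM y hy))
        hint.comp_add_mul_sub hpoint

theorem abs_mul_sub_mul_le {X Y A B C : ℝ} (hX : 0 ≤ X) (hY : 0 ≤ Y) (hA : |A| ≤ C)
    (hB : |B| ≤ C) : |X * A - Y * B| ≤ (X + Y) * C :=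
  calc |X * A - Y * B| ≤ |X * A| + |Y * B| := abs_sub _ _
    _ = X * |A| + Y * |B| := by rw [abs_mul, abs_mul, abs_of_nonneg hX, abs_of_nonneg hY]
    _ ≤ X * C + Y * C := by gcongr
    _ = (X + Y) * C := by ring

theorem ostrowski_identity {f f' : ℝ → ℝ} {m a b x θ : ℝ} (hm : 0 < m) (hθ : 0 < θ)
    (hab : a < b) (hx : x ∈ Icc a b) (hf : ∀ u ∈ Icc (m * a) (m * b), HasDerivAt f (f' u) u)
    (hint : IntervalIntegrable f' volume (m * a) (m * b)) :
    ((x - a) ^ θ + (b - x) ^ θ) / (b - a) * f (m * x) -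
        Real.Gamma (θ + 1) / (m ^ θ * (b - a)) *
          (rlLeft θ (m * a) (m * x) f + rlRight θ (m * x) (m * b) f) =
      m / (b - a) *
        ((x - a) ^ (θ + 1) * (∫ t in (0:ℝ)..1, t ^ θ * f' (m * a + t * (m * x - m * a))) -
          (b - x) ^ (θ + 1) * ∫ t in (0:ℝ)..1, t ^ θ * f' (m * b + t * (m * x - m * b))) := by
  have hax : m * a ≤ m * x := mul_le_mul_of_nonneg_left hx.1 hm.le
  have hxb : m * x ≤ m * b := mul_le_mul_of_nonneg_left hx.2 hm.le
  have hmx : m * x ∈ Icc (m * a) (m * b) := ⟨hax, hxb⟩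
  have hleft := integral_rpow_mul_deriv_comp_segment hθ
    (fun u hu => hf u (uIcc_subset_Icc (left_mem_Icc.2 (hax.trans hxb)) hmx hu))
    (hint.mono_set (uIcc_subset_uIcc left_mem_uIcc (Icc_subset_uIcc hmx)))
  have hright := integral_rpow_mul_deriv_comp_segment hθ
    (fun u hu => hf u (uIcc_subset_Icc (right_mem_Icc.2 (hax.trans hxb)) hmx hu))
    (hint.mono_set (uIcc_subset_uIcc right_mem_uIcc (Icc_subset_uIcc hmx)))
  have hRLl := integral_sub_right_rpow_mul_eq f (by linarith : -1 < θ - 1) hax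
  have hRLr := integral_sub_left_rpow_mul_eq f (by linarith : -1 < θ - 1) hxb
  rw [sub_add_cancel] at hRLl hRLr
  have hxa : (m * x - m * a) ^ θ = m ^ θ * (x - a) ^ θ := by
    rw [← mul_sub, mul_rpow hm.le (by linarith [hx.1])]
  have hbx : (m * b - m * x) ^ θ = m ^ θ * (b - x) ^ θ := by
    rw [← mul_sub, mul_rpow hm.le (by linarith [hx.2])]
  have hxa1 : (x - a) ^ (θ + 1) = (x - a) ^ θ * (x - a) := by
    rw [rpow_add' (by linarith [hx.1]) (by linarith), rpow_one]
  have hbx1 : (b - x) ^ (θ + 1) = (b - x) ^ θ * (b - x) := by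
    rw [rpow_add' (by linarith [hx.2]) (by linarith), rpow_one]
  have hΓ : Real.Gamma θ ≠ 0 := (Gamma_pos_of_pos hθ).ne'
  rw [rlLeft, rlRight, hRLl, hRLr, hxa, hbx, hxa1, hbx1, Gamma_add_one hθ.ne']
  -- opaque integrals, so that `field_simp` does not rewrite the integrands
  generalize (∫ t in (0:ℝ)..1, t ^ θ * f' (m * a + t * (m * x - m * a))) = A at hleft ⊢
  generalize (∫ t in (0:ℝ)..1, t ^ θ * f' (m * b + t * (m * x - m * b))) = B at hright ⊢
  generalize (∫ t in (0:ℝ)..1, t ^ (θ - 1) * f (m * a + t * (m * x - m * a))) = A₀ at hleft ⊢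
  generalize (∫ t in (0:ℝ)..1, t ^ (θ - 1) * f (m * b + t * (m * x - m * b))) = B₀ at hright ⊢
  have hba : b - a ≠ 0 := by linarith
  field_simp
  rw [mul_comm x m]
  linear_combination (-(x - a) ^ θ) * hleft - (b - x) ^ θ * hright

theorem ostrowski_powmean
    (I : Set ℝ) (hI : Set.OrdConnected I) (hI0 : I ⊆ Set.Ici (0:ℝ)) (f f' : ℝ → ℝ) (m a b : ℝ)
    (hm : m ∈ Set.Ioc (0:ℝ) 1) (hab : a < b)
    (hma : m * a ∈ interior I) (hb : b ∈ interior I)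
    (hf : ∀ y ∈ interior I, HasDerivAt f (f' y) y)
    (hint : IntervalIntegrable f' MeasureTheory.volume (m * a) (m * b))
    (α q : ℝ) (hα : α ∈ Set.Icc (0:ℝ) 1) (hq : 1 ≤ q)
    (hconv : AlphaMConvexOn α m (m * a) b (fun u => |f' u| ^ q))
    (M : ℝ) (hM : ∀ u ∈ Set.Icc (m * a) b, |f' u| ≤ M) :
    ∀ x ∈ Set.Icc a b, ∀ θ : ℝ, 0 < θ →
      |((x - a) ^ θ + (b - x) ^ θ) / (b - a) * f (m * x) -
          Real.Gamma (θ + 1) / (m ^ θ * (b - a)) *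
            (rlLeft θ (m * a) (m * x) f + rlRight θ (m * x) (m * b) f)| ≤
        m * M * (1 / (θ + 1)) * ((α * m + θ + 1) / (α + θ + 1)) ^ (1 / q) *
          (((x - a) ^ (θ + 1) + (b - x) ^ (θ + 1)) / (b - a)) := by
  intro x hx θ hθ
  obtain ⟨hm0, hm1⟩ := hm
  have ha0 : 0 ≤ a := nonneg_of_mul_nonneg_right (hI0 (interior_subset hma)) hm0
  have hmb : m * b ≤ b := mul_le_of_le_one_left (ha0.trans hab.le) hm1
  have hmx : m * x ∈ Icc (m * a) (m * b) :=
    ⟨mul_le_mul_of_nonneg_left hx.1 hm0.le, mul_le_mul_of_nonneg_left hx.2 hm0.le⟩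
  have hmx' : m * x ∈ Icc (m * a) b := ⟨hmx.1, hmx.2.trans hmb⟩
  have hmb' : m * b ∈ Icc (m * a) b := ⟨hmx.1.trans hmx.2, hmb⟩
  have hA := abs_integral_rpow_mul_comp_segment_le hθ hα.1 hm0.le hq hconv hM
    ⟨mul_le_of_le_one_left ha0 hm1, hab.le⟩ ⟨le_rfl, hmx'.1.trans hmx'.2⟩ hmx'
    (hint.mono_set (uIcc_subset_uIcc left_mem_uIcc (Icc_subset_uIcc hmx)))
  have hB := abs_integral_rpow_mul_comp_segment_le hθ hα.1 hm0.le hq hconv hM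
    ⟨hmb'.1.trans hmb, le_rfl⟩ hmb' hmx'
    (hint.mono_set (uIcc_subset_uIcc right_mem_uIcc (Icc_subset_uIcc hmx)))
  have hba : 0 < b - a := sub_pos.2 hab
  have hsub : Icc (m * a) b ⊆ interior I := hI.interior.out hma hb
  rw [ostrowski_identity hm0 hθ hab hx (fun u hu => hf u (hsub ⟨hu.1, hu.2.trans hmb⟩)) hint,
    abs_mul, abs_of_pos (div_pos hm0 hba)]
  refine (mul_le_mul_of_nonneg_left (abs_mul_sub_mul_le (rpow_nonneg (sub_nonneg.2 hx.1) _)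
    (rpow_nonneg (sub_nonneg.2 hx.2) _) hA hB) (div_pos hm0 hba).le).trans_eq ?_
  ring
end

section
/- Let f : I ⊂ [0,∞) → ℝ be differentiable on I°, m ∈ (0,1], ma, b ∈ I° with a < b, and suppose f' is integrable on [ma, mb]. If |f'|^q is (α,m)-convex on [ma,b] for some fixed q > 1 and (α,m) ∈ [0,1]², then for every x ∈ [a,b] and λ ∈ [0,1], with p = q/(q−1): |(1−λ) f(mx) + λ ((x−a) f(ma) + (b−x) f(mb))/(b−a) − (1/(m(b−a))) ∫_{ma}^{mb} f(t) dt| ≤ (m (∫₀¹ |t − λ|^p dt)^{1/p}/(b−a)) { (x−a)² ((|f'(mx)|^q + αm |f'(a)|^q)/(α+1))^{1/q} + (b−x)² ((|f'(mx)|^q + αm |f'(b)|^q)/(α+1))^{1/q} }. -/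
/-!
Integrating by parts along the segments from `m a` and from `m b` to `m x` gives
`LHS = m/(b-a) · ((x-a)² ∫₀¹ (t-λ) f'(t·mx + m(1-t)a) dt - (b-x)² ∫₀¹ (t-λ) f'(t·mx + m(1-t)b) dt)`.
Each integral is estimated by Hölder's inequality with exponents `p, q`, and `(α,m)`-convexity
bounds `∫₀¹ |f'(t·mx + m(1-t)v)|^q dt` by `∫₀¹ (t^α |f'(mx)|^q + m(1-t^α) |f'(v)|^q) dt`,
which equals `(|f'(mx)|^q + α m |f'(v)|^q)/(α+1)`.
-/

open MeasureTheory Set intervalIntegral Real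

lemma integral_rpow_mul_add_mul_one_sub_rpow {α : ℝ} (hα : -1 < α) (A B m : ℝ) :
    ∫ t in (0:ℝ)..1, (t ^ α * A + m * (1 - t ^ α) * B) = (A + α * m * B) / (α + 1) := by
  have hα1 : α + 1 ≠ 0 := by linarith
  have hrpow : IntervalIntegrable (fun t : ℝ => t ^ α) volume 0 1 := intervalIntegrable_rpow' hα
  simp_rw [show ∀ t : ℝ, t ^ α * A + m * (1 - t ^ α) * B = (A - m * B) * t ^ α + m * B from
    fun t => by ring]
  rw [integral_add (hrpow.const_mul _) intervalIntegrable_const,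
    intervalIntegral.integral_const_mul, integral_rpow (Or.inl hα), one_rpow, zero_rpow hα1]
  simp only [intervalIntegral.integral_const, sub_zero, smul_eq_mul, one_mul]
  field_simp
  ring

theorem integral_abs_mul_abs_le_Lp_mul_Lq_of_bounded {a b p q C D : ℝ} {f g : ℝ → ℝ}
    (hab : a ≤ b) (hpq : p.HolderConjugate q)
    (hf : IntervalIntegrable f volume a b) (hg : IntervalIntegrable g volume a b)
    (hfC : ∀ t ∈ Ioc a b, |f t| ≤ C) (hgD : ∀ t ∈ Ioc a b, |g t| ≤ D) :
    ∫ t in a..b, |f t| * |g t| ≤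
      (∫ t in a..b, |f t| ^ p) ^ (1 / p) * (∫ t in a..b, |g t| ^ q) ^ (1 / q) := by
  have memLp {h : ℝ → ℝ} {r K : ℝ} (hh : IntervalIntegrable h volume a b)
      (hK : ∀ t ∈ Ioc a b, |h t| ≤ K) : MemLp h (ENNReal.ofReal r) (volume.restrict (Ioc a b)) :=
    MemLp.of_bound hh.1.aestronglyMeasurable K
      (by filter_upwards [ae_restrict_mem measurableSet_Ioc] with t ht using hK t ht)
  simp only [integral_of_le hab]
  exact integral_mul_norm_le_Lp_mul_Lq hpq (memLp hf hfC) (memLp hg hgD)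

lemma integral_abs_sub_mul_abs_le {p q α lam A B m : ℝ} {g : ℝ → ℝ} (hpq : p.HolderConjugate q)
    (hg : IntervalIntegrable g volume 0 1) (hα : 0 ≤ α) (hA : 0 ≤ A) (hB : 0 ≤ B) (hm : 0 ≤ m)
    (hbound : ∀ t ∈ Icc (0:ℝ) 1, |g t| ^ q ≤ t ^ α * A + m * (1 - t ^ α) * B) :
    ∫ t in (0:ℝ)..1, |t - lam| * |g t| ≤
      (∫ t in (0:ℝ)..1, |t - lam| ^ p) ^ (1 / p) * ((A + α * m * B) / (α + 1)) ^ (1 / q) := by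
  have hq : 0 < q := hpq.symm.pos
  have hgq_le : ∀ t ∈ Icc (0:ℝ) 1, |g t| ^ q ≤ A + m * B := by
    intro t ht
    have h0 : 0 ≤ t ^ α := rpow_nonneg ht.1 α
    have h1 : t ^ α ≤ 1 := rpow_le_one ht.1 ht.2 hα
    nlinarith [hbound t ht, mul_nonneg (sub_nonneg.2 h1) hA, mul_nonneg h0 (mul_nonneg hm hB)]
  have hg_le : ∀ t ∈ Ioc (0:ℝ) 1, |g t| ≤ (A + m * B) ^ (1 / q) := fun t ht => by
    rw [one_div, le_rpow_inv_iff_of_pos (abs_nonneg _) (by positivity) hq]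
    exact hgq_le t (Ioc_subset_Icc_self ht)
  have hsub_le : ∀ t ∈ Ioc (0:ℝ) 1, |t - lam| ≤ 1 + |lam| := fun t ht =>
    (abs_sub _ _).trans (by rw [abs_of_pos ht.1]; linarith [ht.2])
  have hgq_int : IntervalIntegrable (fun t => |g t| ^ q) volume 0 1 := by
    refine (intervalIntegrable_const (c := A + m * B)).mono_fun' ?_ ?_
    all_goals rw [uIoc_of_le zero_le_one]
    · exact (hg.1.aestronglyMeasurable.aemeasurable.abs.pow_const q).aestronglyMeasurable
    · filter_upwards [ae_restrict_mem measurableSet_Ioc] with t ht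
      rw [norm_of_nonneg (by positivity)]
      exact hgq_le t (Ioc_subset_Icc_self ht)
  have hgq_integral : ∫ t in (0:ℝ)..1, |g t| ^ q ≤ (A + α * m * B) / (α + 1) := by
    rw [← integral_rpow_mul_add_mul_one_sub_rpow (by linarith) A B m]
    refine integral_mono_on zero_le_one hgq_int ?_ hbound
    exact Continuous.intervalIntegrable (by fun_prop (disch := exact fun _ => Or.inr hα)) 0 1
  calc ∫ t in (0:ℝ)..1, |t - lam| * |g t|
      ≤ (∫ t in (0:ℝ)..1, |t - lam| ^ p) ^ (1 / p) * (∫ t in (0:ℝ)..1, |g t| ^ q) ^ (1 / q) :=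
        integral_abs_mul_abs_le_Lp_mul_Lq_of_bounded zero_le_one hpq
          ((continuous_id.sub continuous_const).intervalIntegrable 0 1) hg hsub_le hg_le
    _ ≤ _ := by
        gcongr
        · exact rpow_nonneg
            (intervalIntegral.integral_nonneg zero_le_one fun t _ => by positivity) _
        · exact intervalIntegral.integral_nonneg zero_le_one fun t _ => by positivity

lemma IntervalIntegrable.comp_sub_mul_add {f : ℝ → ℝ} {v y : ℝ}
    (hf : IntervalIntegrable f volume v y) :
    IntervalIntegrable (fun t => f ((y - v) * t + v)) volume 0 1 := by
  rcases eq_or_ne (y - v) 0 with hc | hc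
  · simp only [hc, zero_mul, zero_add]
    exact intervalIntegrable_const
  · simpa [hc] using (hf.comp_add_right v).comp_mul_left (c := y - v)

lemma sq_mul_integral_sub_mul_deriv_comp {f f' : ℝ → ℝ} {v y : ℝ} (lam : ℝ)
    (hf : ∀ z ∈ uIcc v y, HasDerivAt f (f' z) z) (hf' : IntervalIntegrable f' volume v y) :
    (y - v) ^ 2 * ∫ t in (0:ℝ)..1, (t - lam) * f' ((y - v) * t + v) =
      (y - v) * ((1 - lam) * f y + lam * f v) - ∫ t in v..y, f t := by
  have hmem : ∀ t ∈ uIcc (0:ℝ) 1, (y - v) * t + v ∈ uIcc v y := by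
    intro t ht
    rw [uIcc_of_le zero_le_one] at ht
    rcases le_total v y with h | h
    · rw [uIcc_of_le h]; constructor <;> nlinarith [ht.1, ht.2]
    · rw [uIcc_of_ge h]; constructor <;> nlinarith [ht.1, ht.2]
  have hderiv : ∀ t ∈ uIcc (0:ℝ) 1,
      HasDerivAt (fun s => f ((y - v) * s + v)) ((y - v) * f' ((y - v) * t + v)) t := by
    intro t ht
    have haff : HasDerivAt (fun s => (y - v) * s + v) (y - v) t := by
      simpa using ((hasDerivAt_id t).const_mul (y - v)).add_const v
    rw [mul_comm]
    exact (hf _ (hmem t ht)).comp t haff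
  have hparts := integral_mul_deriv_eq_deriv_mul (fun t _ => (hasDerivAt_id t).sub_const lam)
    hderiv intervalIntegrable_const (hf'.comp_sub_mul_add.const_mul (y - v))
  have hsubst := smul_integral_comp_mul_add (a := (0:ℝ)) (b := 1) f (y - v) v
  simp only [mul_zero, mul_one, zero_add, sub_add_cancel, smul_eq_mul] at hsubst
  simp only [id, one_mul, zero_sub, mul_zero, mul_one, zero_add, sub_add_cancel] at hparts
  rw [← hsubst, sq, mul_assoc, ← intervalIntegral.integral_const_mul]
  simp_rw [mul_left_comm (y - v)]
  rw [hparts]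
  ring

lemma sub_integral_eq_integral_sub_mul_deriv {f f' : ℝ → ℝ} {m a b x : ℝ} (lam : ℝ)
    (hm : 0 < m) (hab : a < b) (hx : x ∈ Icc a b)
    (hf : ∀ z ∈ Icc (m * a) (m * b), HasDerivAt f (f' z) z)
    (hf' : IntervalIntegrable f' volume (m * a) (m * b)) :
    (1 - lam) * f (m * x) + lam * (((x - a) * f (m * a) + (b - x) * f (m * b)) / (b - a)) -
        (1 / (m * (b - a))) * ∫ t in (m * a)..(m * b), f t =
      m / (b - a) *
        ((x - a) ^ 2 * (∫ t in (0:ℝ)..1, (t - lam) * f' ((m * x - m * a) * t + m * a)) -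
          (b - x) ^ 2 * ∫ t in (0:ℝ)..1, (t - lam) * f' ((m * x - m * b) * t + m * b)) := by
  have hxm : m * x ∈ Icc (m * a) (m * b) := ⟨by nlinarith [hx.1], by nlinarith [hx.2]⟩
  rw [← uIcc_of_le (hxm.1.trans hxm.2)] at hf
  have hleft : uIcc (m * a) (m * x) ⊆ uIcc (m * a) (m * b) :=
    uIcc_subset_uIcc left_mem_uIcc (Icc_subset_uIcc hxm)
  have hright : uIcc (m * b) (m * x) ⊆ uIcc (m * a) (m * b) :=
    uIcc_subset_uIcc right_mem_uIcc (Icc_subset_uIcc hxm)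
  have hfint : IntervalIntegrable f volume (m * a) (m * b) :=
    ContinuousOn.intervalIntegrable fun z hz => (hf z hz).continuousAt.continuousWithinAt
  have hsplit : ∫ t in (m * a)..(m * b), f t =
      (∫ t in (m * a)..(m * x), f t) - ∫ t in (m * b)..(m * x), f t := by
    rw [← integral_add_adjacent_intervals (hfint.mono_set hleft) (hfint.mono_set hright).symm,
      integral_symm (m * b) (m * x), sub_eq_add_neg]
  have hleft_eq := sq_mul_integral_sub_mul_deriv_comp lam (fun z hz => hf z (hleft hz))
    (hf'.mono_set hleft)
  have hright_eq := sq_mul_integral_sub_mul_deriv_comp lam (fun z hz => hf z (hright hz))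
    (hf'.mono_set hright)
  set Ia := ∫ t in (0:ℝ)..1, (t - lam) * f' ((m * x - m * a) * t + m * a)
  set Ib := ∫ t in (0:ℝ)..1, (t - lam) * f' ((m * x - m * b) * t + m * b)
  have : b - a ≠ 0 := (sub_pos.2 hab).ne'
  rw [hsplit]
  field_simp
  linear_combination hright_eq - hleft_eq

namespace AlphaMConvexOn

variable {α m a b q : ℝ} {g : ℝ → ℝ}

lemma abs_rpow_le (hconv : AlphaMConvexOn α m (m * a) b (fun u => |g u| ^ q))
    (hm : m ∈ Ioc 0 1) (ha : 0 ≤ a) {x v t : ℝ} (hx : x ∈ Icc a b) (hv : v ∈ Icc a b)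
    (ht : t ∈ Icc (0:ℝ) 1) :
    |g ((m * x - m * v) * t + m * v)| ^ q ≤
      t ^ α * |g (m * x)| ^ q + m * (1 - t ^ α) * |g v| ^ q := by
  obtain ⟨hm0, hm1⟩ := hm
  have hma : m * a ≤ a := mul_le_of_le_one_left ha hm1
  have hmx : m * x ∈ Icc (m * a) b :=
    ⟨by nlinarith [hx.1], (mul_le_of_le_one_left (ha.trans hx.1) hm1).trans hx.2⟩
  have hseg : t * x + (1 - t) * v ∈ Icc a b := by
    constructor <;> nlinarith [hx.1, hx.2, hv.1, hv.2, ht.1, ht.2]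
  have hpt : t * (m * x) + m * (1 - t) * v ∈ Icc (m * a) b := by
    have hb : 0 ≤ b := ha.trans (hx.1.trans hx.2)
    constructor <;> nlinarith [hseg.1, hseg.2, mul_le_of_le_one_left hb hm1]
  have := hconv (m * x) hmx v ⟨hma.trans hv.1, hv.2⟩ t ht hpt
  rwa [show t * (m * x) + m * (1 - t) * v = (m * x - m * v) * t + m * v by ring] at this

lemma abs_integral_sub_mul_le {p lam : ℝ}
    (hconv : AlphaMConvexOn α m (m * a) b (fun u => |g u| ^ q)) (hpq : p.HolderConjugate q)
    (hα : 0 ≤ α) (hm : m ∈ Ioc 0 1) (ha : 0 ≤ a) {x v : ℝ} (hx : x ∈ Icc a b)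
    (hv : v ∈ Icc a b) (hg : IntervalIntegrable g volume (m * v) (m * x)) :
    |∫ t in (0:ℝ)..1, (t - lam) * g ((m * x - m * v) * t + m * v)| ≤
      (∫ t in (0:ℝ)..1, |t - lam| ^ p) ^ (1 / p) *
        ((|g (m * x)| ^ q + α * m * |g v| ^ q) / (α + 1)) ^ (1 / q) :=
  calc |∫ t in (0:ℝ)..1, (t - lam) * g ((m * x - m * v) * t + m * v)|
      ≤ ∫ t in (0:ℝ)..1, |t - lam| * |g ((m * x - m * v) * t + m * v)| := by
        simpa only [abs_mul] using abs_integral_le_integral_abs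
          (f := fun t => (t - lam) * g ((m * x - m * v) * t + m * v)) zero_le_one
    _ ≤ _ := integral_abs_sub_mul_abs_le hpq hg.comp_sub_mul_add hα (by positivity)
        (by positivity) hm.1.le fun _ ht => hconv.abs_rpow_le hm ha hx hv ht

end AlphaMConvexOn

theorem holder_theta_one
    (I : Set ℝ) (hI : Set.OrdConnected I) (hI0 : I ⊆ Set.Ici (0:ℝ)) (f f' : ℝ → ℝ) (m a b : ℝ)
    (hm : m ∈ Set.Ioc (0:ℝ) 1) (hab : a < b)
    (hma : m * a ∈ interior I) (hb : b ∈ interior I)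
    (hf : ∀ y ∈ interior I, HasDerivAt f (f' y) y)
    (hint : IntervalIntegrable f' MeasureTheory.volume (m * a) (m * b))
    (α q : ℝ) (hα : α ∈ Set.Icc (0:ℝ) 1) (hq : 1 < q)
    (hconv : AlphaMConvexOn α m (m * a) b (fun u => |f' u| ^ q)) :
    ∀ x ∈ Set.Icc a b, ∀ lam ∈ Set.Icc (0:ℝ) 1,
      |(1 - lam) * f (m * x) +
          lam * (((x - a) * f (m * a) + (b - x) * f (m * b)) / (b - a)) -
          (1 / (m * (b - a))) * ∫ t in (m * a)..(m * b), f t| ≤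
        m * (∫ t in (0:ℝ)..1, |t - lam| ^ (q / (q - 1))) ^ (1 / (q / (q - 1))) / (b - a) *
          ((x - a) ^ 2 * ((|f' (m * x)| ^ q + α * m * |f' a| ^ q) / (α + 1)) ^ (1 / q) +
            (b - x) ^ 2 * ((|f' (m * x)| ^ q + α * m * |f' b| ^ q) / (α + 1)) ^ (1 / q)) := by
  intro x hx lam _
  obtain ⟨hm0, hm1⟩ := hm
  have ha : 0 ≤ a := (mul_nonneg_iff_of_pos_left hm0).1 (hI0 (interior_subset hma))
  have hderiv : ∀ z ∈ Icc (m * a) (m * b), HasDerivAt f (f' z) z := fun z hz =>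
    hf z (hI.interior.out hma hb
      ⟨hz.1, hz.2.trans (mul_le_of_le_one_left (ha.trans hab.le) hm1)⟩)
  have hxm : m * x ∈ uIcc (m * a) (m * b) :=
    Icc_subset_uIcc ⟨by nlinarith [hx.1], by nlinarith [hx.2]⟩
  have hpq : (q / (q - 1)).HolderConjugate q := (Real.HolderConjugate.conjExponent hq).symm
  have hleft := hconv.abs_integral_sub_mul_le (lam := lam) hpq hα.1 ⟨hm0, hm1⟩ ha hx
    ⟨le_rfl, hab.le⟩ (hint.mono_set (uIcc_subset_uIcc left_mem_uIcc hxm))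
  have hright := hconv.abs_integral_sub_mul_le (lam := lam) hpq hα.1 ⟨hm0, hm1⟩ ha hx
    ⟨hab.le, le_rfl⟩ (hint.mono_set (uIcc_subset_uIcc right_mem_uIcc hxm))
  have hcoef : 0 ≤ m / (b - a) := div_nonneg hm0.le (sub_nonneg.2 hab.le)
  rw [sub_integral_eq_integral_sub_mul_deriv lam hm0 hab hx hderiv hint, abs_mul,
    abs_of_nonneg hcoef]
  grw [abs_sub, abs_mul, abs_mul, abs_sq, abs_sq, hleft, hright]
  exact le_of_eq (by ring)
end
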